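/- arXiv:2211.13581 — 3 statements merged into one kernel-verified Lean document; each statement's English description precedes it below -/
import Mathlib

section
/- Let a_0,…,a_n be distinct real numbers and Ω(x) = ∏_{i=0}^{n}(x−a_i). For any k ≥ 0 and any x not equal to any a_i, (1/k!) Ω^{(k)}(x) = Ω(x) · Z_k(−S_1(x), −S_2(x), …, −S_k(x)), where S_r(x) = Σ_{i=0}^{n} 1/(a_i − x)^r and Z_k is the cycle index of S_k. -/
open Finset

/-- `cycleCount i σ` is the number of cycles of length `i` in the cycle
decomposition of the permutation `σ` (fixed points count as 1-cycles). -/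
def cycleCount {n : ℕ} (i : ℕ) (σ : Equiv.Perm (Fin n)) : ℕ :=
  if i = 1 then (Finset.univ.filter fun a => σ a = a).card
  else Multiset.count i σ.cycleType

/-- The cycle index of the symmetric group `S_n`:
`Z_n(x_1,…,x_n) = (1/n!) ∑_{σ ∈ S_n} ∏_{i=1}^n x_i ^ c_i(σ)`. -/
noncomputable def cycleIndex (n : ℕ) (x : ℕ → ℝ) : ℝ :=
  (n.factorial : ℝ)⁻¹ *
    ∑ σ : Equiv.Perm (Fin n), ∏ i ∈ Finset.Icc 1 n, x i ^ cycleCount i σ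

/-!
Write `y i = (x - a i)⁻¹` and `e_k(y) = ∑_{|T| = k} ∏_{i ∈ T} y i`; both sides equal `Ω(x) e_k(y)`.

Left side: by Taylor's formula `Ω^{(k)}(x) / k!` is the coefficient of `h^k` in
`Ω(x + h) = ∏ ((x - a i) + h)`, namely `∑_{|T| = k} ∏_{i ∉ T} (x - a i) = Ω(x) e_k(y)`.

Right side: `-S_r(x) = (-1)^(r+1) p_r(y)` with `p_r` the power sum, and the signs multiply to
`sign σ`, so `k! Z_k = ∑_σ sign σ ∏_O p_{|O|}(y)` over the orbits `O` of `σ`. Expanding,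
`∏_O p_{|O|}(y)` is the sum of `∏_j y (f j)` over the maps `f` constant on the orbits, i.e. with
`f ∘ σ = f`. Exchanging the sums, each `f` is weighted by the signed size of its stabiliser,
which vanishes unless `f` is injective (a transposition of two points with the same image pairs
the stabiliser off), and the injective `f` contribute `k! e_k(y)`.
-/

open scoped Nat

namespace Polynomial

theorem iteratedDeriv_eval {𝕜 : Type*} [NontriviallyNormedField 𝕜] (p : 𝕜[X]) (k : ℕ) (x : 𝕜) :
    iteratedDeriv k (fun t => p.eval t) x = (derivative^[k] p).eval x := by
  induction k generalizing p with
  | zero => simp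
  | succ k ih =>
    have hderiv : _root_.deriv (fun t => p.eval t) = fun t => (derivative p).eval t :=
      _root_.funext fun _ => p.deriv
    rw [iteratedDeriv_succ', hderiv, ih, Function.iterate_succ_apply]

theorem eval_iterate_derivative_eq_taylor_coeff {R : Type*} [CommSemiring R] (p : R[X]) (k : ℕ)
    (r : R) :
    (derivative^[k] p).eval r = k ! * (taylor r p).coeff k := by
  rw [taylor_coeff, ← factorial_smul_hasseDeriv]
  simp [nsmul_eq_mul]

theorem taylor_prod_X_sub_C {ι R : Type*} [CommRing R] (s : Finset ι) (a : ι → R) (r : R) :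
    taylor r (∏ i ∈ s, (X - C (a i))) = ∏ i ∈ s, (X + C (r - a i)) := by
  rw [← taylorAlgHom_apply, map_prod]
  simp [taylor_X, taylor_C, sub_eq_add_neg, add_assoc]

theorem coeff_prod_X_add_C {ι R : Type*} [CommSemiring R] [DecidableEq ι] (s : Finset ι)
    (c : ι → R) (k : ℕ) :
    (∏ i ∈ s, (X + C (c i))).coeff k = ∑ t ∈ s.powersetCard k, ∏ i ∈ s \ t, c i := by
  rw [prod_add, finsetSum_coeff, powersetCard_eq_filter, sum_filter]
  refine sum_congr rfl fun t _ => ?_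
  rw [prod_const, ← map_prod, coeff_X_pow_mul', coeff_C]
  split_ifs <;> first | rfl | omega

end Polynomial

open Polynomial in
theorem iteratedDeriv_prod_sub {ι 𝕜 : Type*} [NontriviallyNormedField 𝕜] [DecidableEq ι]
    (s : Finset ι) (a : ι → 𝕜) (k : ℕ) (x : 𝕜) :
    iteratedDeriv k (fun t => ∏ i ∈ s, (t - a i)) x =
      k ! * ∑ u ∈ s.powersetCard k, ∏ i ∈ s \ u, (x - a i) := by
  have hpoly : (fun t => ∏ i ∈ s, (t - a i)) = fun t => (∏ i ∈ s, (X - C (a i))).eval t := by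
    simp [eval_prod]
  rw [hpoly, iteratedDeriv_eval, eval_iterate_derivative_eq_taylor_coeff, taylor_prod_X_sub_C,
    coeff_prod_X_add_C]

namespace Equiv.Perm

theorem apply_eq_of_comp_eq_of_sameCycle {α β : Type*} [Finite α] {σ : Perm α} {f : α → β}
    (hf : f ∘ σ = f) {a b : α} (h : σ.SameCycle a b) : f a = f b := by
  obtain ⟨n, -, rfl⟩ := h.exists_nat_pow_eq
  rw [coe_pow]
  exact (congrFun (Function.iterate_invariant hf n) a).symm

variable {α : Type*} [Fintype α] [DecidableEq α]

instance (σ : Perm α) : DecidableRel (SameCycle.setoid σ).r :=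
  inferInstanceAs (DecidableRel (SameCycle σ))

def orbitCard (σ : Perm α) (q : Quotient (SameCycle.setoid σ)) : ℕ :=
  #{a | Quotient.mk _ a = q}

section orbitCard

variable {σ : Perm α}

theorem orbitCard_mk (a : α) : σ.orbitCard (Quotient.mk _ a) = #{b | σ.SameCycle a b} :=
  congrArg card <| filter_congr fun _ _ => Quotient.eq.trans ⟨SameCycle.symm, SameCycle.symm⟩

theorem orbitCard_mk_of_apply_eq {a : α} (ha : σ a = a) : σ.orbitCard (Quotient.mk _ a) = 1 := by
  rw [orbitCard_mk, card_eq_one]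
  refine ⟨a, eq_singleton_iff_unique_mem.2 ⟨mem_filter.2 ⟨mem_univ _, .refl _ _⟩, fun b hb => ?_⟩⟩
  exact ((mem_filter.1 hb).2.eq_of_left ha).symm

theorem orbitCard_mk_of_apply_ne {a : α} (ha : σ a ≠ a) :
    σ.orbitCard (Quotient.mk _ a) = #(σ.cycleOf a).support := by
  rw [orbitCard_mk]
  congr 1
  ext b
  simp [mem_support_cycleOf_iff' ha]

theorem orbitCard_mk_eq_one_iff {a : α} : σ.orbitCard (Quotient.mk _ a) = 1 ↔ σ a = a := by
  refine ⟨fun h => ?_, orbitCard_mk_of_apply_eq⟩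
  by_contra ha
  have := two_le_card_support_cycleOf_iff.2 ha
  rw [orbitCard_mk_of_apply_ne ha] at h
  omega

theorem card_filter_apply_eq_self : #{a | σ a = a} = Fintype.card α - #σ.support := by
  rw [← card_compl]
  congr 1
  ext a
  simp

theorem card_filter_orbitCard_eq_one : #{q | σ.orbitCard q = 1} = #{a | σ a = a} := by
  refine (card_nbij (Quotient.mk _) ?_ ?_ ?_).symm
  · intro a ha
    simpa [orbitCard_mk_eq_one_iff] using ha
  · intro a ha b _ hab
    exact (Quotient.exact hab).eq_of_left (mem_filter.1 ha).2
  · intro q hq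
    obtain ⟨a, rfl⟩ := q.exists_rep
    simp only [coe_filter, mem_univ, true_and, Set.mem_ofPred_eq] at hq
    exact ⟨a, by simpa [orbitCard_mk_eq_one_iff] using hq, rfl⟩

theorem prod_filter_orbitCard_ne_one {M : Type*} [CommMonoid M] (z : ℕ → M) :
    ∏ q with ¬σ.orbitCard q = 1, z (σ.orbitCard q) = ∏ c ∈ σ.cycleFactorsFinset, z #c.support := by
  refine prod_nbij (Quotient.lift σ.cycleOf fun _ _ => SameCycle.cycleOf_eq) ?_ ?_ ?_ ?_
  · intro q hq
    obtain ⟨a, rfl⟩ := q.exists_rep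
    simp only [mem_filter, mem_univ, true_and, orbitCard_mk_eq_one_iff] at hq
    exact cycleOf_mem_cycleFactorsFinset_iff.2 (mem_support.2 hq)
  · intro q hq q' hq' h
    obtain ⟨a, rfl⟩ := q.exists_rep
    obtain ⟨b, rfl⟩ := q'.exists_rep
    simp only [coe_filter, mem_univ, true_and, Set.mem_ofPred_eq, orbitCard_mk_eq_one_iff] at hq hq'
    exact Quotient.sound ((sameCycle_iff_cycleOf_eq_of_mem_support (mem_support.2 hq)
      (mem_support.2 hq')).2 h)
  · intro c hc
    obtain ⟨a, ha⟩ := (mem_cycleFactorsFinset_iff.1 hc).1.nonempty_support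
    refine ⟨Quotient.mk _ a, ?_, (cycle_is_cycleOf ha hc).symm⟩
    simp only [coe_filter, mem_univ, true_and, Set.mem_ofPred_eq, orbitCard_mk_eq_one_iff]
    exact mem_support.1 (mem_cycleFactorsFinset_support_le hc ha)
  · intro q hq
    obtain ⟨a, rfl⟩ := q.exists_rep
    simp only [mem_filter, mem_univ, true_and, orbitCard_mk_eq_one_iff] at hq
    rw [orbitCard_mk_of_apply_ne hq]
    rfl

theorem prod_orbitCard {M : Type*} [CommMonoid M] (z : ℕ → M) :
    ∏ q, z (σ.orbitCard q) = (σ.partition.parts.map z).prod := by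
  rw [parts_partition, Multiset.map_add, Multiset.prod_add, Multiset.map_replicate,
    Multiset.prod_replicate, cycleType_def, Multiset.map_map, ← prod_eq_multiset_prod,
    ← prod_filter_not_mul_prod_filter univ fun q => σ.orbitCard q = 1,
    prod_filter_orbitCard_ne_one, prod_congr rfl fun q hq => congrArg z (mem_filter.1 hq).2,
    prod_const, card_filter_orbitCard_eq_one, card_filter_apply_eq_self]
  rfl

end orbitCard

def funQuotientSameCycleEquiv (σ : Perm α) (β : Type*) :
    (Quotient (SameCycle.setoid σ) → β) ≃ {f : α → β // f ∘ σ = f} where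
  toFun g :=
    ⟨g ∘ Quotient.mk _, funext fun a => congrArg g (Quotient.sound (.apply_left (.refl σ a)))⟩
  invFun f := Quotient.lift f.1 fun _ _ => apply_eq_of_comp_eq_of_sameCycle f.2
  left_inv _ := funext fun q => Quotient.inductionOn q fun _ => rfl
  right_inv _ := rfl

theorem prod_sum_pow_orbitCard {β R : Type*} [Fintype β] [DecidableEq β] [CommSemiring R]
    (σ : Perm α) (y : β → R) :
    ∏ q, ∑ b, y b ^ σ.orbitCard q = ∑ f : α → β with f ∘ σ = f, ∏ a, y (f a) := by
  rw [prod_univ_sum, Fintype.piFinset_univ, sum_subtype _ (p := fun f => f ∘ σ = f) (by simp),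
    ← (funQuotientSameCycleEquiv σ β).sum_comp]
  refine sum_congr rfl fun g _ => ?_
  simp only [orbitCard, ← prod_const]
  exact prod_fiberwise' univ (Quotient.mk _) fun q => y (g q)

theorem intCast_sign_eq_prod_parts_partition {R : Type*} [CommRing R] (σ : Perm α) :
    ((sign σ : ℤ) : R) = (σ.partition.parts.map fun r => (-1 : R) ^ (r + 1)).prod := by
  have hsign : sign σ = (σ.partition.parts.map fun r => (-1 : ℤˣ) ^ (r + 1)).prod := by
    simp [parts_partition, sign_of_cycleType', pow_succ]
  have h := map_multiset_prod ((Int.castRingHom R).toMonoidHom.comp (Units.coeHom ℤ))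
    (σ.partition.parts.map fun r => (-1 : ℤˣ) ^ (r + 1))
  rw [← hsign] at h
  simpa [Multiset.map_map, Function.comp_def] using h

theorem sum_sign_filter_comp_eq {R β : Type*} [Ring R] [DecidableEq β] (f : α → β) :
    ∑ σ ∈ univ.filter fun σ : Perm α => f ∘ σ = f, ((sign σ : ℤ) : R) =
      if Function.Injective f then 1 else 0 := by
  split_ifs with hf
  · rw [sum_eq_single_of_mem 1 (by simp)]
    · simp
    · intro σ hσ hne
      refine absurd (ext fun a => hf ?_) hne
      exact congrFun (mem_filter.1 hσ).2 a
  · obtain ⟨a, b, hab, hne⟩ := Function.not_injective_iff.1 hf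
    have hswap : f ∘ swap a b = f := funext fun c => by
      rcases eq_or_ne c a with rfl | hca
      · simp [hab]
      rcases eq_or_ne c b with rfl | hcb
      · simp [hab]
      · simp [swap_apply_of_ne_of_ne hca hcb]
    refine sum_involution (fun σ _ => swap a b * σ) (fun σ _ => ?_) (fun σ _ _ h => ?_)
      (fun σ hσ => ?_) (fun σ _ => swap_mul_self_mul a b σ)
    · simp [sign_swap hne]
    · exact hne (by simpa using congrArg (· b) (mul_eq_right.1 h))
    · simp only [mem_filter, mem_univ, true_and] at hσ ⊢
      rw [coe_mul, ← Function.comp_assoc, hswap, hσ]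

end Equiv.Perm

theorem card_filter_injective_image_eq {β : Type*} [Fintype β] [DecidableEq β] {k : ℕ}
    {t : Finset β} (ht : #t = k) :
    #{f : Fin k → β | Function.Injective f ∧ univ.image f = t} = k ! := by
  let e : {f : Fin k → β // Function.Injective f ∧ univ.image f = t} ≃ (Fin k ≃ t) :=
    { toFun f := .ofBijective
        (fun j => ⟨f.1 j, f.2.2.subset (mem_image_of_mem _ (mem_univ j))⟩) <| by
        refine (Fintype.bijective_iff_injective_and_card _).2 ⟨fun i j h => f.2.1 ?_, by simp [ht]⟩
        exact congrArg Subtype.val h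
      invFun e := ⟨fun j => e j, Subtype.val_injective.comp e.injective, by
        ext b
        simp only [mem_image, mem_univ, true_and]
        exact ⟨by rintro ⟨j, rfl⟩; exact (e j).2, fun hb => ⟨e.symm ⟨b, hb⟩, by simp⟩⟩⟩
      left_inv _ := rfl
      right_inv _ := Equiv.ext fun _ => rfl }
  rw [← Fintype.card_subtype, Fintype.card_congr e,
    Fintype.card_equiv (t.equivFinOfCardEq ht).symm, Fintype.card_fin]

theorem sum_injective_prod_eq_factorial_mul {β R : Type*} [Fintype β] [DecidableEq β]
    [CommSemiring R] (k : ℕ) (y : β → R) :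
    ∑ f : Fin k → β with Function.Injective f, ∏ j, y (f j) =
      k ! * ∑ t ∈ univ.powersetCard k, ∏ i ∈ t, y i := by
  have hmaps : ∀ f ∈ univ.filter fun f : Fin k → β => Function.Injective f,
      univ.image f ∈ univ.powersetCard k := fun f hf => by
    simp [card_image_of_injective _ (mem_filter.1 hf).2]
  rw [← sum_fiberwise_of_maps_to hmaps, mul_sum]
  refine sum_congr rfl fun t ht => ?_
  rw [sum_congr rfl fun f hf => ?_, sum_const, filter_filter,
    card_filter_injective_image_eq (mem_powersetCard.1 ht).2, nsmul_eq_mul]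
  simp only [mem_filter, mem_univ, true_and] at hf
  obtain ⟨hinj, rfl⟩ := hf
  exact (prod_image fun i _ j _ h => hinj h).symm

open Equiv.Perm in
theorem cycleCount_eq_count_parts {k i : ℕ} (σ : Equiv.Perm (Fin k)) (hi : 1 ≤ i) :
    cycleCount i σ = σ.partition.parts.count i := by
  rw [cycleCount, parts_partition, Multiset.count_add, Multiset.count_replicate]
  split_ifs with h1 h2 h2
  · subst h1
    rw [Multiset.count_eq_zero.2 fun h => (one_lt_of_mem_cycleType h).ne rfl,
      card_filter_apply_eq_self]
    simp
  · omega
  · omega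
  · rfl

theorem prod_pow_cycleCount {M : Type*} [CommMonoid M] {k : ℕ} (σ : Equiv.Perm (Fin k))
    (z : ℕ → M) : ∏ i ∈ Icc 1 k, z i ^ cycleCount i σ = (σ.partition.parts.map z).prod := by
  have hparts : σ.partition.parts.toFinset ⊆ Icc 1 k := fun i hi => by
    rw [Multiset.mem_toFinset] at hi
    exact mem_Icc.2 ⟨σ.partition.parts_pos hi, by simpa using Nat.Partition.le_of_mem_parts hi⟩
  rw [prod_multiset_map_count, prod_subset hparts fun i _ hi => by
    rw [Multiset.count_eq_zero.2 (mt Multiset.mem_toFinset.2 hi), pow_zero]]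
  exact prod_congr rfl fun i hi => by rw [cycleCount_eq_count_parts σ (mem_Icc.1 hi).1]

open Equiv.Perm in
theorem cycleIndex_signed_powerSum {β : Type*} [Fintype β] [DecidableEq β] (k : ℕ) (y : β → ℝ) :
    cycleIndex k (fun r => (-1) ^ (r + 1) * ∑ b, y b ^ r) =
      ∑ t ∈ univ.powersetCard k, ∏ i ∈ t, y i := by
  have hterm (σ : Equiv.Perm (Fin k)) :
      ∏ i ∈ Icc 1 k, ((-1) ^ (i + 1) * ∑ b, y b ^ i) ^ cycleCount i σ =
        ∑ f : Fin k → β, (∏ j, y (f j)) * if f ∘ σ = f then ((sign σ : ℤ) : ℝ) else 0 := by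
    rw [prod_pow_cycleCount, Multiset.prod_map_mul, ← intCast_sign_eq_prod_parts_partition,
      ← prod_orbitCard, prod_sum_pow_orbitCard, sum_filter, mul_sum]
    exact sum_congr rfl fun f _ => by split_ifs <;> ring
  have hstab (f : Fin k → β) :
      ∑ σ : Equiv.Perm (Fin k), (if f ∘ σ = f then ((sign σ : ℤ) : ℝ) else 0) =
        if Function.Injective f then 1 else 0 := by
    rw [← sum_filter]
    exact sum_sign_filter_comp_eq f
  rw [cycleIndex, sum_congr rfl fun σ _ => hterm σ, sum_comm]
  simp_rw [← mul_sum, hstab, mul_ite, mul_one, mul_zero]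
  rw [← sum_filter, sum_injective_prod_eq_factorial_mul, ← mul_assoc,
    inv_mul_cancel₀ (by positivity), one_mul]

theorem iteratedDeriv_prod_cycleIndex_general (n : ℕ) (a : Fin (n + 1) → ℝ)
    (k : ℕ) (x : ℝ) (hx : ∀ i, x ≠ a i) :
    (k.factorial : ℝ)⁻¹ * iteratedDeriv k (fun t => ∏ i, (t - a i)) x =
      (∏ i, (x - a i)) *
        cycleIndex k (fun r => -∑ i, ((a i - x) ^ r)⁻¹) := by
  have hS : (fun r => -∑ i, ((a i - x) ^ r)⁻¹) =
      fun r => (-1) ^ (r + 1) * ∑ i, (x - a i)⁻¹ ^ r := by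
    funext r
    rw [mul_sum, ← sum_neg_distrib]
    refine sum_congr rfl fun i _ => ?_
    rw [← neg_sub x, neg_pow, mul_inv, ← inv_pow, ← inv_pow, inv_neg_one, pow_succ]
    ring
  have hcompl (t : Finset (Fin (n + 1))) :
      ∏ i ∈ univ \ t, (x - a i) = (∏ i, (x - a i)) * ∏ i ∈ t, (x - a i)⁻¹ := by
    rw [← prod_sdiff (subset_univ t), mul_assoc, ← prod_mul_distrib,
      prod_eq_one fun i _ => mul_inv_cancel₀ (sub_ne_zero.2 (hx i)), mul_one]
  rw [hS, cycleIndex_signed_powerSum, iteratedDeriv_prod_sub, sum_congr rfl fun t _ => hcompl t,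
    ← mul_sum, ← mul_assoc, inv_mul_cancel₀ (by positivity), one_mul]

/-- For distinct nodes `a_0,…,a_n`, `Ω(x) = ∏ (x - a_i)`, `k ≥ 0` and `x ≠ a_i`:
`(1/k!) Ω^{(k)}(x) = Ω(x) · Z_k(-S_1(x),…,-S_k(x))` with
`S_r(x) = ∑_i (a_i - x)^{-r}`. -/
theorem iteratedDeriv_prod_cycleIndex (n : ℕ) (a : Fin (n + 1) → ℝ)
    (ha : Function.Injective a) (k : ℕ) (x : ℝ) (hx : ∀ i, x ≠ a i) :
    (k.factorial : ℝ)⁻¹ * iteratedDeriv k (fun t => ∏ i, (t - a i)) x =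
      (∏ i, (x - a i)) *
        cycleIndex k (fun r => -∑ i, ((a i - x) ^ r)⁻¹) :=
  iteratedDeriv_prod_cycleIndex_general n a k x hx
end

section
/- Let h > 0, ν and n be integers with 1 ≤ ν and 2ν ≤ n, and define interpolation nodes a_0 = ξ, a_{2j−1} = ξ + jh and a_{2j} = ξ − jh for 1 ≤ j ≤ ν, and a_{ν+j} = ξ − jh for ν+1 ≤ j ≤ n−ν. Then for 1 ≤ i ≤ ν, the derivative of the Lagrange fundamental polynomial l_{2i−1} at ξ equals l_{2i−1}'(ξ) = (−1)^{i−1} ν! (n−ν)! / ( i h (ν−i)! (n−ν+i)! ). -/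
/-!
Since `ξ = a₀` is itself a node, the product rule leaves a single term of `l_{2i-1}'(ξ)`:
the product of `ξ - a_j` over the nodes other than `ξ` and `ξ + ih`, divided by the
normalising constant `∏_{j ≠ 2i-1} (a_{2i-1} - a_j)`. The nodes are exactly `ξ + kh` for the
integers `-(n-ν) ≤ k ≤ ν`, so both products are `h`-powers times products of the nonzero
integers of a window `[-s, t]`, which equal `(-1)^s s! t!`.
-/

open Finset

section NodalDerivative

variable {𝕜 ι : Type*} [NontriviallyNormedField 𝕜] [DecidableEq ι]

theorem hasDerivAt_prod_sub_of_mem {s : Finset ι} {k : ι} (hk : k ∈ s) (b : ι → 𝕜) :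
    HasDerivAt (fun x => ∏ j ∈ s, (x - b j)) (∏ j ∈ s.erase k, (b k - b j)) (b k) := by
  refine (HasDerivAt.fun_finsetProd fun j _ =>
    (hasDerivAt_id (b k)).sub_const (b j)).congr_deriv ?_
  rw [sum_eq_single_of_mem k hk fun l _ hlk => ?_]
  · simp
  · rw [prod_eq_zero (mem_erase.2 ⟨Ne.symm hlk, hk⟩) (sub_self _), zero_smul]

theorem hasDerivAt_lagrange_basis_at_node {s : Finset ι} {m k : ι} (hk : k ∈ s) (hkm : k ≠ m)
    (b : ι → 𝕜) :
    HasDerivAt (fun x => ∏ j ∈ s.erase m, (x - b j) / (b m - b j))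
      ((∏ j ∈ (s.erase m).erase k, (b k - b j)) / ∏ j ∈ s.erase m, (b m - b j)) (b k) := by
  simp only [prod_div_distrib]
  exact (hasDerivAt_prod_sub_of_mem (mem_erase.2 ⟨hkm, hk⟩) b).div_const _

end NodalDerivative

section IntegerNodes

variable {R : Type*} [CommRing R]

theorem prod_Icc_erase_zero (s t : ℕ) :
    ∏ d ∈ (Icc (-(s : ℤ)) t).erase 0, (d : R) = (-1) ^ s * s.factorial * t.factorial := by
  induction s with
  | zero =>
    induction t with
    | zero => simp
    | succ t ih =>
      have hinsert : (Icc (-((0 : ℕ) : ℤ)) (t + 1 : ℕ)).erase 0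
          = insert ((t + 1 : ℕ) : ℤ) ((Icc (-((0 : ℕ) : ℤ)) t).erase 0) := by
        ext; simp only [mem_erase, mem_Icc, mem_insert]; omega
      rw [hinsert, prod_insert (by simp), ih, Nat.factorial_succ]
      push_cast; ring
  | succ s ih =>
    have hinsert : (Icc (-((s + 1 : ℕ) : ℤ)) t).erase 0
        = insert (-((s + 1 : ℕ) : ℤ)) ((Icc (-(s : ℤ)) t).erase 0) := by
      ext; simp only [mem_erase, mem_Icc, mem_insert]; omega
    rw [hinsert, prod_insert (by simp), ih, Nat.factorial_succ]
    push_cast; ring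

theorem prod_Icc_erase_sub (p q c : ℕ) (hc : c ≤ p) :
    ∏ k ∈ (Icc (-(q : ℤ)) p).erase (c : ℤ), ((c - k : ℤ) : R)
      = (-1) ^ (p - c) * (p - c).factorial * (q + c).factorial := by
  rw [← prod_Icc_erase_zero]
  refine prod_nbij' (fun k => c - k) (fun d => c - d) ?_ ?_ ?_ ?_ fun _ _ => rfl <;>
    simp only [mem_erase, mem_Icc] <;> omega

theorem prod_Icc_erase_sub_equidistant (p q c : ℕ) (hc : c ≤ p) (x h : R) :
    ∏ k ∈ (Icc (-(q : ℤ)) p).erase (c : ℤ), (x + c * h - (x + k * h))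
      = (-1) ^ (p - c) * (p - c).factorial * (q + c).factorial * h ^ (p + q) := by
  have hcard : #((Icc (-(q : ℤ)) p).erase (c : ℤ)) = p + q := by
    rw [card_erase_of_mem (by simp only [mem_Icc]; omega), Int.card_Icc]; omega
  calc ∏ k ∈ (Icc (-(q : ℤ)) p).erase (c : ℤ), (x + c * h - (x + k * h))
      = ∏ k ∈ (Icc (-(q : ℤ)) p).erase (c : ℤ), ((c - k : ℤ) : R) * h :=
        prod_congr rfl fun k _ => by push_cast; ring
    _ = _ := by rw [← prod_mul_pow_card, prod_Icc_erase_sub p q c hc, hcard]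

end IntegerNodes

theorem hasDerivAt_lagrange_basis_equidistant (ξ h : ℝ) (hh : h ≠ 0) (p q i : ℕ) (hi : 1 ≤ i)
    (hip : i ≤ p) :
    HasDerivAt (fun x => ∏ k ∈ (Icc (-(q : ℤ)) p).erase (i : ℤ),
        (x - (ξ + k * h)) / (ξ + i * h - (ξ + k * h)))
      ((-1) ^ (i - 1) * p.factorial * q.factorial /
        (i * h * (p - i).factorial * (q + i).factorial)) ξ := by
  have hderiv := hasDerivAt_lagrange_basis_at_node (s := Icc (-(q : ℤ)) p) (m := (i : ℤ))
    (k := 0) (by simp) (by omega) fun k => ξ + k * h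
  simp only [Int.cast_zero, zero_mul, add_zero, Int.cast_natCast] at hderiv
  refine hderiv.congr_deriv ?_
  -- the numerator lacks the factor `ξ - (ξ + ih)` of the full product over `k ≠ 0`
  have hnum := prod_Icc_erase_sub_equidistant p q 0 (Nat.zero_le p) ξ h
  simp only [Nat.cast_zero, zero_mul, add_zero, Nat.sub_zero] at hnum
  rw [← mul_prod_erase _ _ (show ((i : ℕ) : ℤ) ∈ (Icc (-(q : ℤ)) p).erase 0 by simp; omega),
    erase_right_comm] at hnum
  simp only [Int.cast_natCast] at hnum
  have hshift : ξ - (ξ + i * h) ≠ 0 := by simp [hh]; omega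
  rw [eq_div_of_mul_eq hshift ((mul_comm _ _).trans hnum),
    prod_Icc_erase_sub_equidistant p q i hip]
  obtain ⟨r, rfl⟩ : ∃ r, p = i + r := ⟨p - i, by omega⟩
  obtain ⟨j, rfl⟩ : ∃ j, i = j + 1 := ⟨i - 1, by omega⟩
  simp only [Nat.add_sub_cancel_left, Nat.add_sub_cancel, pow_add]
  field_simp
  ring

section Enumeration

/-- The index `j` with `a_j = ξ + k h` in the enumeration of the nodes. -/
def nodeIndex (ν : ℕ) (k : ℤ) : ℕ :=
  if 0 < k then 2 * k.toNat - 1 else if -(ν : ℤ) ≤ k then 2 * (-k).toNat else ν + (-k).toNat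

def nodeOffset (ν j : ℕ) : ℤ :=
  if 2 * ν < j then ν - j else if j % 2 = 1 then ((j : ℤ) + 1) / 2 else -(j / 2 : ℕ)

theorem prod_range_erase_nodeIndex {M : Type*} [CommMonoid M] {n ν : ℕ} (hνn : 2 * ν ≤ n)
    {c : ℤ} (hc : c ∈ Icc (-((n - ν : ℕ) : ℤ)) ν) (g : ℕ → M) :
    ∏ j ∈ (range (n + 1)).erase (nodeIndex ν c), g j
      = ∏ k ∈ (Icc (-((n - ν : ℕ) : ℤ)) ν).erase c, g (nodeIndex ν k) := by
  rw [mem_Icc] at hc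
  refine (prod_nbij' (nodeIndex ν) (nodeOffset ν) ?_ ?_ ?_ ?_ fun _ _ => rfl).symm <;>
    simp only [mem_erase, mem_Icc, mem_range, nodeIndex, nodeOffset] <;>
    intro x <;> split_ifs <;> omega

theorem apply_nodeIndex {a : ℕ → ℝ} {ξ h : ℝ} {n ν : ℕ} (ha0 : a 0 = ξ)
    (haodd : ∀ j, 1 ≤ j → j ≤ ν → a (2 * j - 1) = ξ + j * h)
    (haeven : ∀ j, 1 ≤ j → j ≤ ν → a (2 * j) = ξ - j * h)
    (hatail : ∀ j, ν + 1 ≤ j → j ≤ n - ν → a (ν + j) = ξ - j * h)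
    {k : ℤ} (hk : k ∈ Icc (-((n - ν : ℕ) : ℤ)) ν) :
    a (nodeIndex ν k) = ξ + k * h := by
  rcases eq_or_ne k 0 with rfl | hk0
  · simpa [nodeIndex] using ha0
  rw [mem_Icc] at hk
  obtain ⟨j, rfl | rfl⟩ := Int.eq_nat_or_neg k
  · rw [show nodeIndex ν j = 2 * j - 1 by unfold nodeIndex; split_ifs <;> omega,
      haodd j (by omega) (by omega), Int.cast_natCast]
  · rcases le_or_gt j ν with hjν | hjν
    · rw [show nodeIndex ν (-j) = 2 * j by unfold nodeIndex; split_ifs <;> omega,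
        haeven j (by omega) hjν]
      push_cast; ring
    · rw [show nodeIndex ν (-j) = ν + j by unfold nodeIndex; split_ifs <;> omega,
        hatail j (by omega) (by omega)]
      push_cast; ring

end Enumeration

theorem deriv_lagrange_equidistant_general (ξ h : ℝ) (hh : 0 < h) (n ν : ℕ)
    (hνn : 2 * ν ≤ n) (a : ℕ → ℝ)
    (ha0 : a 0 = ξ)
    (haodd : ∀ j, 1 ≤ j → j ≤ ν → a (2 * j - 1) = ξ + j * h)
    (haeven : ∀ j, 1 ≤ j → j ≤ ν → a (2 * j) = ξ - j * h)
    (hatail : ∀ j, ν + 1 ≤ j → j ≤ n - ν → a (ν + j) = ξ - j * h)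
    (i : ℕ) (hi1 : 1 ≤ i) (hiν : i ≤ ν) :
    deriv
        (fun x => ∏ j ∈ (Finset.range (n + 1)).erase (2 * i - 1),
          (x - a j) / (a (2 * i - 1) - a j)) ξ =
      (-1) ^ (i - 1) * (ν.factorial : ℝ) * ((n - ν).factorial : ℝ) /
        ((i : ℝ) * h * ((ν - i).factorial : ℝ) * ((n - ν + i).factorial : ℝ)) := by
  have hnode := fun k => apply_nodeIndex (k := k) ha0 haodd haeven hatail
  have hmem : (i : ℤ) ∈ Icc (-((n - ν : ℕ) : ℤ)) ν := by simp only [mem_Icc]; omega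
  have hidx : nodeIndex ν i = 2 * i - 1 := by simp only [nodeIndex]; split_ifs <;> omega
  have hfun : (fun x => ∏ j ∈ (range (n + 1)).erase (2 * i - 1),
        (x - a j) / (a (2 * i - 1) - a j))
      = fun x => ∏ k ∈ (Icc (-((n - ν : ℕ) : ℤ)) ν).erase (i : ℤ),
        (x - (ξ + k * h)) / (ξ + i * h - (ξ + k * h)) := by
    funext x
    rw [← hidx, prod_range_erase_nodeIndex hνn hmem, hnode _ hmem, Int.cast_natCast]
    exact prod_congr rfl fun k hk => by rw [hnode _ (mem_of_mem_erase hk)]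
  rw [hfun, (hasDerivAt_lagrange_basis_equidistant ξ h hh.ne' ν (n - ν) i hi1 hiν).deriv]

/-- With the equidistant nodes `a_0 = ξ`, `a_{2j-1} = ξ + jh`, `a_{2j} = ξ - jh`
for `1 ≤ j ≤ ν`, and `a_{ν+j} = ξ - jh` for `ν+1 ≤ j ≤ n-ν`, the Lagrange
fundamental polynomial at the node `a_{2i-1} = ξ + ih` (for `1 ≤ i ≤ ν`) satisfies
`l_{2i-1}'(ξ) = (-1)^{i-1} ν! (n-ν)! / (i h (ν-i)! (n-ν+i)!)`. -/
theorem deriv_lagrange_equidistant (ξ h : ℝ) (hh : 0 < h) (n ν : ℕ)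
    (hν : 1 ≤ ν) (hνn : 2 * ν ≤ n) (a : ℕ → ℝ)
    (ha0 : a 0 = ξ)
    (haodd : ∀ j, 1 ≤ j → j ≤ ν → a (2 * j - 1) = ξ + j * h)
    (haeven : ∀ j, 1 ≤ j → j ≤ ν → a (2 * j) = ξ - j * h)
    (hatail : ∀ j, ν + 1 ≤ j → j ≤ n - ν → a (ν + j) = ξ - j * h)
    (i : ℕ) (hi1 : 1 ≤ i) (hiν : i ≤ ν) :
    deriv
        (fun x => ∏ j ∈ (Finset.range (n + 1)).erase (2 * i - 1),
          (x - a j) / (a (2 * i - 1) - a j)) ξ =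
      (-1) ^ (i - 1) * (ν.factorial : ℝ) * ((n - ν).factorial : ℝ) /
        ((i : ℝ) * h * ((ν - i).factorial : ℝ) * ((n - ν + i).factorial : ℝ)) :=
  deriv_lagrange_equidistant_general ξ h hh n ν hνn a ha0 haodd haeven hatail i hi1 hiν
end

section
/- Let ξ ∈ (−1,1), h > 0, and real numbers λ_{j_0}, …, λ_{j_{n−k}} be n−k+1 distinct integers each lying in [k−ν, n−ν], with nodes a_{j_i} = ξ − λ_{j_i} h. Suppose x ∈ [−1,1] with x ≥ ξ and 1 − ξ = (ν+1)h. Then ∏_{i=0}^{n−k}(x − a_{j_i}) ≤ ((n+k+2)/2)^{n−k+1} h^{n−k+1}, provided each factor x − a_{j_i} ≥ 0. -/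
/-!
Every factor `x - (ξ - λᵢ h) = (x - ξ) + λᵢ h` is nonnegative, so by AM–GM the product is at
most the `m`-th power of the mean of the factors, `m = n - k + 1`. Since
`x - ξ ≤ 1 - ξ = (ν + 1) h` and `m` distinct integers `≤ n - ν` sum to at most
`m (n - ν) - m (m - 1) / 2`, that mean is at most `(n + k + 2) h / 2`.
-/

open Finset

theorem Real.prod_le_pow_card_of_sum_le {ι : Type*} {s : Finset ι} {f : ι → ℝ} {B : ℝ}
    (hf : ∀ i ∈ s, 0 ≤ f i) (hsum : ∑ i ∈ s, f i ≤ #s * B) :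
    ∏ i ∈ s, f i ≤ B ^ #s := by
  rcases s.eq_empty_or_nonempty with rfl | hs
  · simp
  have hcard : (0 : ℝ) < #s := by exact_mod_cast hs.card_pos
  have hgm : ∏ i ∈ s, f i ^ (#s : ℝ)⁻¹ ≤ B := calc
    _ ≤ ∑ i ∈ s, (#s : ℝ)⁻¹ * f i :=
      Real.geom_mean_le_arith_mean_weighted s _ f (fun _ _ => by positivity)
        (by simp [hcard.ne']) hf
    _ ≤ B := by rw [← mul_sum, inv_mul_le_iff₀ hcard]; exact hsum
  calc ∏ i ∈ s, f i = (∏ i ∈ s, f i ^ (#s : ℝ)⁻¹) ^ #s := by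
        rw [← prod_pow]
        refine prod_congr rfl fun i hi => ?_
        rw [← Real.rpow_mul_natCast (hf i hi), inv_mul_cancel₀ hcard.ne', Real.rpow_one]
    _ ≤ B ^ #s := pow_le_pow_left₀ (prod_nonneg fun i hi => Real.rpow_nonneg (hf i hi) _) hgm _

theorem Finset.two_mul_sum_le_of_injOn {ι : Type*} {s : Finset ι} {f : ι → ℤ} {c : ℤ}
    (hinj : Set.InjOn f s) (hle : ∀ i ∈ s, f i ≤ c) :
    2 * ∑ i ∈ s, f i ≤ #s * (2 * c - #s + 1) := by
  have hbound : ∑ i ∈ s, f i ≤ ∑ j ∈ range #s, (c - j) := by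
    simpa [sum_image hinj, card_image_of_injOn hinj] using
      sum_le_sum_range (s := s.image f) (c := c) (by simpa using hle)
  have hgauss : ∀ m : ℕ, (∑ j ∈ range m, (j : ℤ)) * 2 = m * (m - 1) := fun m => by
    induction m with
    | zero => simp
    | succ m ih => rw [sum_range_succ, add_mul, ih]; push_cast; ring
  rw [sum_sub_distrib, sum_const, card_range, nsmul_eq_mul] at hbound
  linarith [hgauss #s]

theorem prod_nodes_le_general (n k ν : ℕ) (ξ h : ℝ)
    (hh : 0 < h)
    (lam : Fin (n - k + 1) → ℤ) (hinj : Function.Injective lam)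
    (hlam : ∀ i, (k : ℤ) - (ν : ℤ) ≤ lam i ∧ lam i ≤ (n : ℤ) - (ν : ℤ))
    (x : ℝ) (hx : x ∈ Set.Icc (-1 : ℝ) 1)
    (hstep : 1 - ξ = ((ν : ℝ) + 1) * h)
    (hfac : ∀ i, 0 ≤ x - (ξ - (lam i : ℝ) * h)) :
    ∏ i, (x - (ξ - (lam i : ℝ) * h)) ≤
      (((n : ℝ) + (k : ℝ) + 2) / 2) ^ (n - k + 1) * h ^ (n - k + 1) := by
  have hlam_sum : 2 * ∑ i, (lam i : ℝ) ≤
      ((n - k + 1 : ℕ) : ℝ) * (2 * ((n : ℝ) - ν) - ((n - k + 1 : ℕ) : ℝ) + 1) := by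
    have := two_mul_sum_le_of_injOn (s := univ) hinj.injOn fun i _ => (hlam i).2
    simp only [card_univ, Fintype.card_fin] at this
    exact_mod_cast this
  have hm : (n : ℝ) - k + 1 ≤ ((n - k + 1 : ℕ) : ℝ) := by
    have : (n : ℤ) - k + 1 ≤ ((n - k + 1 : ℕ) : ℤ) := by omega
    exact_mod_cast this
  have hxξ : x - ξ ≤ ((ν : ℝ) + 1) * h := by linarith [hx.2]
  have hsum : ∑ i, (x - (ξ - (lam i : ℝ) * h)) ≤
      #(univ : Finset (Fin (n - k + 1))) * ((n + k + 2) / 2 * h) := by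
    have hsplit : ∑ i, (x - (ξ - (lam i : ℝ) * h)) =
        ((n - k + 1 : ℕ) : ℝ) * (x - ξ) + (∑ i, (lam i : ℝ)) * h := by
      simp only [sub_sub_eq_add_sub, add_sub_right_comm, sum_add_distrib, sum_const, card_univ,
        Fintype.card_fin, nsmul_eq_mul, sum_mul]
    rw [hsplit, card_univ, Fintype.card_fin]
    have hm0 : (0 : ℝ) ≤ ((n - k + 1 : ℕ) : ℝ) := Nat.cast_nonneg _
    nlinarith [mul_le_mul_of_nonneg_left hxξ hm0, mul_le_mul_of_nonneg_right hlam_sum hh.le,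
      mul_le_mul_of_nonneg_left hm (mul_nonneg hm0 hh.le)]
  simpa [mul_pow] using Real.prod_le_pow_card_of_sum_le (fun i _ => hfac i) hsum

/-- AM–GM product bound for the interpolation error analysis: if
`λ_{j_0},…,λ_{j_{n-k}}` are `n-k+1` distinct integers in `[k-ν, n-ν]`, the
nodes are `a_{j_i} = ξ - λ_{j_i} h`, `x ∈ [-1,1]` with `x ≥ ξ`,
`1 - ξ = (ν+1)h`, and every factor `x - a_{j_i}` is nonnegative, then
`∏_i (x - a_{j_i}) ≤ ((n+k+2)/2)^{n-k+1} h^{n-k+1}`. -/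
theorem prod_nodes_le (n k ν : ℕ) (hkn : k ≤ n) (ξ h : ℝ)
    (hξ : ξ ∈ Set.Ioo (-1 : ℝ) 1) (hh : 0 < h)
    (lam : Fin (n - k + 1) → ℤ) (hinj : Function.Injective lam)
    (hlam : ∀ i, (k : ℤ) - (ν : ℤ) ≤ lam i ∧ lam i ≤ (n : ℤ) - (ν : ℤ))
    (x : ℝ) (hx : x ∈ Set.Icc (-1 : ℝ) 1) (hxξ : ξ ≤ x)
    (hstep : 1 - ξ = ((ν : ℝ) + 1) * h)
    (hfac : ∀ i, 0 ≤ x - (ξ - (lam i : ℝ) * h)) :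
    ∏ i, (x - (ξ - (lam i : ℝ) * h)) ≤
      (((n : ℝ) + (k : ℝ) + 2) / 2) ^ (n - k + 1) * h ^ (n - k + 1) :=
  prod_nodes_le_general n k ν ξ h hh lam hinj hlam x hx hstep hfac
end
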